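/- arXiv:1106.4068 — 2 statements merged into one kernel-verified Lean document; each statement's English description precedes it below -/
import Mathlib

section
/- Let (V, ω) be a finite-dimensional n-plectic vector space and let W ⊆ V be a k-isotropic subspace, where 1 ≤ k ≤ n. Then for every k′ with k ≤ k′ ≤ n there exists a k′-Lagrangian subspace of V containing W. -/
/-!
Among the subspaces `L ⊇ W` such that `ω` vanishes whenever `k' + 1` of its arguments lie in `L`
(for `k ≤ k'` this includes `W` itself) choose a maximal one, which exists in finite dimension.
Such an `L` is `k'`-isotropic. If some `v ∈ L^{⊥,k'}` were not in `L`, then `ω` would still vanish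
on `L + ℝ v` by multilinearity: a term with `v` in two slots vanishes because `ω` is alternating,
and a term with `v` in one slot vanishes, after moving `v` to the front, because
`v ∈ L^{⊥,k'}`. This contradicts maximality, so `L = L^{⊥,k'}`.
-/

/-- The `k`-orthogonal complement `W^{⊥,k}` of a subspace `W` with respect to an
alternating `(n+1)`-form `ω`. -/
def kPerp {V : Type*} [AddCommGroup V] [Module ℝ V] {n : ℕ}
    (ω : AlternatingMap ℝ V ℝ (Fin (n + 1))) (W : Submodule ℝ V)
    (k : ℕ) (hk : k ≤ n) : Set V :=
  {v | ∀ w : Fin k → V, (∀ i, w i ∈ W) → ∀ u : Fin (n - k) → V,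
    ω (Fin.cons v (Fin.append w u) ∘
      Fin.cast (show n + 1 = k + (n - k) + 1 by omega)) = 0}

theorem MultilinearMap.map_eq_zero_of_forall_mem_span {R ι M N : Type*} [CommSemiring R]
    [AddCommMonoid M] [Module R M] [AddCommMonoid N] [Module R N] [Fintype ι] [DecidableEq ι]
    (g : MultilinearMap R (fun _ : ι => M) N) (s : ι → Set M)
    (hg : ∀ f : ι → M, (∀ i, f i ∈ s i) → g f = 0)
    (f : ι → M) (hf : ∀ i, f i ∈ Submodule.span R (s i)) : g f = 0 := by
  suffices h : ∀ I : Finset ι, ∀ f : ι → M, (∀ i ∈ I, f i ∈ Submodule.span R (s i)) →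
      (∀ i ∉ I, f i ∈ s i) → g f = 0 from
    h Finset.univ f (fun i _ => hf i) (by simp)
  intro I
  induction I using Finset.induction_on with
  | empty => exact fun f _ hs => hg f fun i => hs i (Finset.notMem_empty i)
  | insert a I ha ih =>
    intro f hspan hs
    have hker : s a ⊆ LinearMap.ker (g.toLinearMap f a) := by
      intro x hx
      refine ih _ (fun i hi => ?_) (fun i hi => ?_)
      · rw [Function.update_of_ne (ne_of_mem_of_not_mem hi ha)]
        exact hspan i (Finset.mem_insert_of_mem hi)
      · rcases eq_or_ne i a with rfl | hia
        · simpa using hx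
        · rw [Function.update_of_ne hia]
          exact hs i (by simp [hia, hi])
    simpa using Submodule.span_le.mpr hker (hspan a (Finset.mem_insert_self a I))

theorem Fin.cons_append_cast_apply_of_le {α : Type*} {n k : ℕ} (hk : k ≤ n) (v : α)
    (w : Fin k → α) (u : Fin (n - k) → α) (i : Fin (n + 1)) (hi0 : 0 < (i : ℕ))
    (hik : (i : ℕ) ≤ k) :
    (Fin.cons v (Fin.append w u) ∘ Fin.cast (show n + 1 = k + (n - k) + 1 by omega)) i =
      w ⟨i - 1, by omega⟩ := by
  have hi : Fin.cast (show n + 1 = k + (n - k) + 1 by omega) i =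
      (Fin.castAdd (n - k) (⟨i - 1, by omega⟩ : Fin k)).succ := by
    ext; simp; omega
  rw [Function.comp_apply, hi, Fin.cons_succ, Fin.append_left]

section
variable {V : Type*} [AddCommGroup V] [Module ℝ V] {n : ℕ}
  (ω : AlternatingMap ℝ V ℝ (Fin (n + 1)))

theorem mem_kPerp_iff {k : ℕ} (hk : k ≤ n) (W : Submodule ℝ V) (v : V) :
    v ∈ kPerp ω W k hk ↔ ∀ f : Fin (n + 1) → V, f 0 = v →
      (∀ i : Fin (n + 1), 0 < (i : ℕ) → (i : ℕ) ≤ k → f i ∈ W) → ω f = 0 := by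
  have hcast : n + 1 = k + (n - k) + 1 := by omega
  constructor
  · intro hv f hf0 hfW
    set g := f ∘ Fin.cast hcast.symm
    have hg : Fin.cons v (Fin.append (fun i => Fin.tail g (Fin.castAdd (n - k) i))
        (fun j => Fin.tail g (Fin.natAdd k j))) ∘ Fin.cast hcast = f := by
      rw [Fin.append_castAdd_natAdd, ← hf0, show f 0 = g 0 from rfl, Fin.cons_self_tail]
      ext i; simp [g]
    rw [← hg]
    exact hv _ (fun i => hfW _ (by simp) (by simp [Fin.val_succ])) _
  · intro h w hw u
    refine h _ rfl fun i hi0 hik => ?_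
    rw [Fin.cons_append_cast_apply_of_le hk v w u i hi0 hik]
    exact hw _

def IsKIsotropic (L : Submodule ℝ V) (k : ℕ) : Prop :=
  ∀ f : Fin (n + 1) → V, (∀ i : Fin (n + 1), (i : ℕ) ≤ k → f i ∈ L) → ω f = 0

variable {ω}

theorem IsKIsotropic.mono {L : Submodule ℝ V} {k k' : ℕ} (hL : IsKIsotropic ω L k)
    (hkk' : k ≤ k') : IsKIsotropic ω L k' :=
  fun f hf => hL f fun i hi => hf i (hi.trans hkk')

theorem subset_kPerp_iff {k : ℕ} (hk : k ≤ n) (L : Submodule ℝ V) :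
    (L : Set V) ⊆ kPerp ω L k hk ↔ IsKIsotropic ω L k := by
  constructor
  · intro hL f hf
    exact (mem_kPerp_iff ω hk L (f 0)).mp (hL (hf 0 (Nat.zero_le _))) f rfl
      fun i _ hik => hf i hik
  · intro hL x hx
    refine (mem_kPerp_iff ω hk L x).mpr fun f hf0 hfL => hL f fun i hik => ?_
    rcases Nat.eq_zero_or_pos i with hi0 | hi0
    · obtain rfl : i = 0 := Fin.ext hi0
      exact hf0 ▸ hx
    · exact hfL i hi0 hik

theorem map_eq_zero_of_apply_zero_mem_kPerp {k : ℕ} (hk : k ≤ n) {L : Submodule ℝ V} {v : V}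
    (hv : v ∈ kPerp ω L k hk) (f : Fin (n + 1) → V) (hf0 : f 0 = v)
    (hf : ∀ i : Fin (n + 1), 0 < (i : ℕ) → (i : ℕ) ≤ k → f i ∈ L ∨ f i = v) : ω f = 0 := by
  by_cases hrep : ∃ i : Fin (n + 1), 0 < (i : ℕ) ∧ (i : ℕ) ≤ k ∧ f i = v
  · obtain ⟨i, hi0, -, hfi⟩ := hrep
    exact ω.map_eq_zero_of_eq f (hfi.trans hf0.symm) (Fin.pos_iff_ne_zero.mp hi0)
  · push Not at hrep
    exact (mem_kPerp_iff ω hk L v).mp hv f hf0 fun i hi0 hik =>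
      (hf i hi0 hik).resolve_right (hrep i hi0 hik)

theorem IsKIsotropic.map_eq_zero_of_mem_kPerp {k : ℕ} (hk : k ≤ n) {L : Submodule ℝ V}
    (hL : IsKIsotropic ω L k) {v : V} (hv : v ∈ kPerp ω L k hk) (f : Fin (n + 1) → V)
    (hf : ∀ i : Fin (n + 1), (i : ℕ) ≤ k → f i ∈ L ∨ f i = v) : ω f = 0 := by
  by_cases hfL : ∀ i : Fin (n + 1), (i : ℕ) ≤ k → f i ∈ L
  · exact hL f hfL
  push Not at hfL
  obtain ⟨j, hjk, hjL⟩ := hfL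
  have hfj : f j = v := (hf j hjk).resolve_left hjL
  -- move the argument `v` in slot `j` to the front
  set σ := Equiv.swap (0 : Fin (n + 1)) j
  have hσ : ∀ i : Fin (n + 1), (i : ℕ) ≤ k → (σ i : ℕ) ≤ k := by
    intro i hik
    rcases eq_or_ne i 0 with rfl | hi0
    · simpa [σ] using hjk
    rcases eq_or_ne i j with rfl | hij
    · simp [σ]
    · rwa [Equiv.swap_apply_of_ne_of_ne hi0 hij]
  have hfσ0 : (f ∘ σ) 0 = v := by simpa [σ] using hfj
  rw [ω.map_congr_perm f σ, map_eq_zero_of_apply_zero_mem_kPerp hk hv (f ∘ σ) hfσ0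
    fun i _ hik => hf _ (hσ i hik), smul_zero]

theorem IsKIsotropic.sup_span_singleton {k : ℕ} (hk : k ≤ n) {L : Submodule ℝ V}
    (hL : IsKIsotropic ω L k) {v : V} (hv : v ∈ kPerp ω L k hk) :
    IsKIsotropic ω (L ⊔ ℝ ∙ v) k := by
  classical
  intro f hf
  refine ω.toMultilinearMap.map_eq_zero_of_forall_mem_span
    (fun i => if (i : ℕ) ≤ k then (L : Set V) ∪ {v} else Set.univ) (fun g hg => ?_) f fun i => ?_
  · exact hL.map_eq_zero_of_mem_kPerp hk hv g fun i hik => Or.symm (by simpa [hik] using hg i)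
  · split_ifs with hik
    · rw [Submodule.span_union, Submodule.span_eq]
      exact hf i hik
    · simp

end

theorem exists_lagrangian_containing_isotropic_general
    {V : Type*} [AddCommGroup V] [Module ℝ V] [FiniteDimensional ℝ V] {n : ℕ}
    (ω : AlternatingMap ℝ V ℝ (Fin (n + 1)))
    (W : Submodule ℝ V) (k : ℕ) (hkn : k ≤ n)
    (hiso : (W : Set V) ⊆ kPerp ω W k hkn)
    (k' : ℕ) (hk' : k ≤ k') (hk'n : k' ≤ n) :
    ∃ L : Submodule ℝ V, W ≤ L ∧ (L : Set V) = kPerp ω L k' hk'n := by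
  obtain ⟨L, ⟨hWL, hL⟩, hmax⟩ := wellFounded_gt.has_min
    {L : Submodule ℝ V | W ≤ L ∧ IsKIsotropic ω L k'}
    ⟨W, le_rfl, ((subset_kPerp_iff hkn W).mp hiso).mono hk'⟩
  refine ⟨L, hWL, ((subset_kPerp_iff hk'n L).mpr hL).antisymm fun v hv => ?_⟩
  by_contra hvL
  exact hmax _ ⟨hWL.trans le_sup_left, hL.sup_span_singleton hk'n hv⟩
    (Submodule.lt_sup_iff_notMem.mpr hvL)

/-- if `W` is a `k`-isotropic subspace of a finite-dimensional
`n`-plectic vector space `(V, ω)` and `k ≤ k′ ≤ n`, then there is a `k′`-Lagrangian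
subspace of `V` containing `W`. -/
theorem exists_lagrangian_containing_isotropic
    {V : Type*} [AddCommGroup V] [Module ℝ V] [FiniteDimensional ℝ V] {n : ℕ}
    (ω : AlternatingMap ℝ V ℝ (Fin (n + 1)))
    (hnondeg : ∀ v : V, (∀ u : Fin n → V, ω (Fin.cons v u) = 0) → v = 0)
    (W : Submodule ℝ V) (k : ℕ) (hk1 : 1 ≤ k) (hkn : k ≤ n)
    (hiso : (W : Set V) ⊆ kPerp ω W k hkn)
    (k' : ℕ) (hk' : k ≤ k') (hk'n : k' ≤ n) :
    ∃ L : Submodule ℝ V, W ≤ L ∧ (L : Set V) = kPerp ω L k' hk'n :=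
  exists_lagrangian_containing_isotropic_general ω W k hkn hiso k' hk' hk'n
end

section
/- Let V be a real inner product space and let J₁, J₂ : V → V be linear maps with J₁² = J₂² = −id, J₁J₂ = −J₂J₁, and ⟨Jₐv, Jₐw⟩ = ⟨v, w⟩ for a = 1, 2 and all v, w ∈ V. Set J₃ = J₁ ∘ J₂, θₐ(v,w) = ⟨v, Jₐw⟩, and define ω : V⁴ → ℝ by ω(a,b,c,d) = Σ_{i=1}^{3} [θᵢ(a,b)θᵢ(c,d) − θᵢ(a,c)θᵢ(b,d) + θᵢ(a,d)θᵢ(b,c)] (a scalar multiple of θ₁∧θ₁ + θ₂∧θ₂ + θ₃∧θ₃). Then for every v ∈ V one has ω(v, J₁v, J₂v, J₃v) = 3⟨v,v⟩²; consequently ω is nondegenerate: if v ∈ V satisfies ω(v,b,c,d) = 0 for all b, c, d ∈ V, then v = 0. (This is the pointwise computation showing that a hyper-Kähler manifold is a 3-plectic manifold.) -/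
open RealInnerProductSpace

/-- let `V` be a real inner product space with anticommuting orthogonal
complex structures `J₁, J₂`, set `J₃ = J₁ ∘ J₂`, `θₐ (v, w) = ⟪v, Jₐ w⟫`, and let
`ω (a,b,c,d) = Σᵢ [θᵢ(a,b)θᵢ(c,d) − θᵢ(a,c)θᵢ(b,d) + θᵢ(a,d)θᵢ(b,c)]`.  Then
`ω (v, J₁ v, J₂ v, J₃ v) = 3 ⟪v, v⟫²` for every `v`, and consequently `ω` is
nondegenerate. -/
theorem hyperkaehler_four_form_nondegenerate
    {V : Type*} [NormedAddCommGroup V] [InnerProductSpace ℝ V]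
    (J₁ J₂ : V →ₗ[ℝ] V)
    (hJ₁ : ∀ v, J₁ (J₁ v) = -v) (hJ₂ : ∀ v, J₂ (J₂ v) = -v)
    (hanti : ∀ v, J₁ (J₂ v) = -(J₂ (J₁ v)))
    (ho₁ : ∀ v w, ⟪J₁ v, J₁ w⟫ = ⟪v, w⟫)
    (ho₂ : ∀ v w, ⟪J₂ v, J₂ w⟫ = ⟪v, w⟫)
    (θ₁ θ₂ θ₃ : V → V → ℝ)
    (hθ₁ : ∀ v w, θ₁ v w = ⟪v, J₁ w⟫)
    (hθ₂ : ∀ v w, θ₂ v w = ⟪v, J₂ w⟫)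
    (hθ₃ : ∀ v w, θ₃ v w = ⟪v, J₁ (J₂ w)⟫)
    (ω : V → V → V → V → ℝ)
    (hω : ∀ a b c d, ω a b c d =
      (θ₁ a b * θ₁ c d - θ₁ a c * θ₁ b d + θ₁ a d * θ₁ b c) +
      (θ₂ a b * θ₂ c d - θ₂ a c * θ₂ b d + θ₂ a d * θ₂ b c) +
      (θ₃ a b * θ₃ c d - θ₃ a c * θ₃ b d + θ₃ a d * θ₃ b c)) :
    (∀ v : V, ω v (J₁ v) (J₂ v) (J₁ (J₂ v)) = 3 * ⟪v, v⟫ ^ 2) ∧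
    (∀ v : V, (∀ b c d : V, ω v b c d = 0) → v = 0) := by
  have sk₁ : ∀ w : V, ⟪w, J₁ w⟫ = 0 := by
    intro w
    have h := ho₁ w (J₁ w)
    rw [hJ₁, inner_neg_right, real_inner_comm] at h
    linarith
  have sk₂ : ∀ w : V, ⟪w, J₂ w⟫ = 0 := by
    intro w
    have h := ho₂ w (J₂ w)
    rw [hJ₂, inner_neg_right, real_inner_comm] at h
    linarith
  have sk₃ : ∀ w : V, ⟪w, J₂ (J₁ w)⟫ = 0 := by
    intro w
    have h1 : ⟪w, J₂ (J₁ w)⟫ = -⟪J₂ w, J₁ w⟫ := by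
      rw [← ho₂ w (J₂ (J₁ w)), hJ₂, inner_neg_right]
    have h2 : ⟪J₂ w, J₁ w⟫ = ⟪w, J₂ (J₁ w)⟫ := by
      rw [← ho₁ (J₂ w) (J₁ w), hanti, hJ₁, inner_neg_left, inner_neg_right, neg_neg,
        real_inner_comm]
    linarith
  have sk₁' : ∀ w : V, ⟪J₁ w, w⟫ = 0 := fun w => by rw [real_inner_comm]; exact sk₁ w
  have sk₂' : ∀ w : V, ⟪J₂ w, w⟫ = 0 := fun w => by rw [real_inner_comm]; exact sk₂ w
  have sk₃' : ∀ w : V, ⟪J₂ (J₁ w), w⟫ = 0 := fun w => by rw [real_inner_comm]; exact sk₃ w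
  have main : ∀ v : V, ω v (J₁ v) (J₂ v) (J₁ (J₂ v)) = 3 * ⟪v, v⟫ ^ 2 := by
    intro v
    simp only [hω, hθ₁, hθ₂, hθ₃, hanti, hJ₁, hJ₂, map_neg, inner_neg_right,
      inner_neg_left, neg_neg, ho₁, ho₂, sk₁, sk₂, sk₃, sk₁', sk₂', sk₃']
    ring
  refine ⟨main, fun v hv => ?_⟩
  have h := hv (J₁ v) (J₂ v) (J₁ (J₂ v))
  rw [main v] at h
  have : ⟪v, v⟫ = 0 := by nlinarith [sq_nonneg (⟪v, v⟫ : ℝ)]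
  exact inner_self_eq_zero.mp this
end
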